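/- Let V and W be Banach spaces, t > 0, 0 < α < β < 1, and let G : V → W satisfy ‖G(v)‖ ≤ c_G + c_{DG}|v| and ‖G(v) − G(w)‖ ≤ c_{DG}|v − w| for all v, w ∈ V. Then there exists a constant c > 0, depending only on α, β, t, c_G and c_{DG} (in particular independent of λ and u), such that for every λ ≥ 0, every u ∈ C^{β,∼}([0,t];V) and every r ∈ (0,t): ‖D^α_{0+} ( e^{−λ(t−·)} G(u(·)) ) [r]‖ ≤ c (1 + ‖u‖_{β,∼,0,t}) r^{−α} ( 1 + r^β (t−r)^{−β} ). -/

import Mathlib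

open Set MeasureTheory

/-- The left-sided Weyl fractional derivative
`D^α_{0+}Z[r] = (1/Γ(1−α)) ( Z(r)/(r−T₁)^α + α ∫_{T₁}^r (Z(r)−Z(q))/(r−q)^{1+α} dq )`
(with left endpoint `T₁`). -/
noncomputable def fracDerivLeft {W : Type*} [NormedAddCommGroup W] [NormedSpace ℝ W]
    (α T₁ : ℝ) (Z : ℝ → W) (r : ℝ) : W :=
  (1 / Real.Gamma (1 - α)) •
    (((r - T₁) ^ (-α)) • Z r +
      α • ∫ q in T₁..r, ((r - q) ^ (-(1 + α))) • (Z r - Z q))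

/-!
Write `Z s = e^{-λ(t-s)} G(u s)`. Linear growth of `G` bounds `‖Z r‖` by `c_G + c_{DG} sup ‖u‖`. In
`Z r - Z q = e^{-λ(t-r)} (G(u r) - G(u q)) + (e^{-λ(t-r)} - e^{-λ(t-q)}) G(u q)` the first term is
controlled by the weighted Hölder seminorm of `u`, and the second by
`e^{-λ(t-r)} (1 - e^{-λ(r-q)}) ≤ (λ(t-r))^β e^{-λ(t-r)} (r-q)^β (t-r)^{-β} ≤ (r-q)^β (t-r)^{-β}`,
uniformly in `λ ≥ 0` since `x^β e^{-x} ≤ 1`. As `1 ≤ r^β q^{-β}`, altogether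
`‖Z r - Z q‖ ≤ K q^{-β} (r-q)^β` with `K` of order `(1 + ‖u‖) (1 + r^β (t-r)^{-β})`, so the integral
in `D^α_{0+}` is at most `K ∫_0^r q^{-β} (r-q)^{β-1-α} dq`, a Beta integral equal to a constant
times `r^{-α}` because `α < β < 1`.
-/

namespace Real

lemma one_sub_exp_neg_le_rpow {x b : ℝ} (hx : 0 ≤ x) (hb0 : 0 ≤ b) (hb1 : b ≤ 1) :
    1 - exp (-x) ≤ x ^ b := by
  rcases le_total x 1 with hx1 | hx1
  · calc 1 - exp (-x) ≤ x := by linarith [add_one_le_exp (-x)]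
      _ ≤ x ^ b := self_le_rpow_of_le_one hx hx1 hb1
  · linarith [exp_pos (-x), one_le_rpow hx1 hb0]

lemma rpow_mul_exp_neg_le_one {x b : ℝ} (hx : 0 ≤ x) (hb0 : 0 ≤ b) (hb1 : b ≤ 1) :
    x ^ b * exp (-x) ≤ 1 := by
  have hxb : x ^ b ≤ exp x := by
    rcases le_total x 1 with hx1 | hx1
    · exact (rpow_le_one hx hx1 hb0).trans (one_le_exp hx)
    · calc x ^ b ≤ x ^ (1 : ℝ) := rpow_le_rpow_of_exponent_le hx1 hb1
        _ ≤ exp x := by rw [rpow_one]; linarith [add_one_le_exp x]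
  calc x ^ b * exp (-x) ≤ exp x * exp (-x) := by gcongr
    _ = 1 := by rw [← exp_add, add_neg_cancel, exp_zero]

lemma exp_neg_mul_sub_sub_exp_le {lam t q r b : ℝ} (hlam : 0 ≤ lam) (hb0 : 0 ≤ b) (hb1 : b ≤ 1)
    (hqr : q ≤ r) (hrt : r < t) :
    exp (-lam * (t - r)) - exp (-lam * (t - q)) ≤ (r - q) ^ b * (t - r) ^ (-b) := by
  have htr : 0 < t - r := by linarith
  have hrq : 0 ≤ r - q := by linarith
  have hsplit : exp (-lam * (t - r)) - exp (-lam * (t - q))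
      = exp (-(lam * (t - r))) * (1 - exp (-(lam * (r - q)))) := by
    rw [show -lam * (t - q) = -(lam * (t - r)) + -(lam * (r - q)) by ring, exp_add, neg_mul]
    ring
  have hscale : exp (-(lam * (t - r))) * (lam * (r - q)) ^ b
      = ((lam * (t - r)) ^ b * exp (-(lam * (t - r)))) * ((r - q) ^ b * (t - r) ^ (-b)) := by
    rw [mul_rpow hlam hrq, mul_rpow hlam htr.le, rpow_neg htr.le]
    field_simp
  calc exp (-lam * (t - r)) - exp (-lam * (t - q))
      ≤ exp (-(lam * (t - r))) * (lam * (r - q)) ^ b := by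
        rw [hsplit]; gcongr; exact one_sub_exp_neg_le_rpow (by positivity) hb0 hb1
    _ ≤ 1 * ((r - q) ^ b * (t - r) ^ (-b)) := by
        rw [hscale]; gcongr; exact rpow_mul_exp_neg_le_one (by positivity) hb0 hb1
    _ = (r - q) ^ b * (t - r) ^ (-b) := one_mul _

end Real

section BetaIntegral

open intervalIntegral

variable {a b r : ℝ}

lemma rpow_mul_sub_rpow_le_of_le_half (hb : b ≤ 0) (hr : 0 < r) {q : ℝ} (hq : 0 ≤ q)
    (hqr : q ≤ r / 2) : q ^ a * (r - q) ^ b ≤ (r / 2) ^ b * q ^ a := by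
  rw [mul_comm]
  exact mul_le_mul_of_nonneg_right
    (Real.rpow_le_rpow_of_nonpos (by linarith) (by linarith) hb) (Real.rpow_nonneg hq a)

lemma intervalIntegrable_rpow_mul_sub_rpow_left (ha : -1 < a) (hb : b ≤ 0) (hr : 0 < r) :
    IntervalIntegrable (fun q => q ^ a * (r - q) ^ b) volume 0 (r / 2) := by
  refine ((intervalIntegrable_rpow' ha).const_mul ((r / 2) ^ b)).mono_fun'
    (by fun_prop) ?_
  rw [uIoc_of_le (by linarith)]
  filter_upwards [ae_restrict_mem measurableSet_Ioc] with q hq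
  have hrq : 0 ≤ r - q := by linarith [hq.2]
  rw [Real.norm_of_nonneg (mul_nonneg (Real.rpow_nonneg hq.1.le _) (Real.rpow_nonneg hrq _))]
  exact rpow_mul_sub_rpow_le_of_le_half hb hr hq.1.le hq.2

lemma integral_rpow_mul_sub_rpow_left_le (ha : -1 < a) (hb : b ≤ 0) (hr : 0 < r) :
    ∫ q in (0 : ℝ)..r / 2, q ^ a * (r - q) ^ b ≤ (r / 2) ^ (a + b + 1) / (a + 1) := by
  calc ∫ q in (0 : ℝ)..r / 2, q ^ a * (r - q) ^ b
      ≤ ∫ q in (0 : ℝ)..r / 2, (r / 2) ^ b * q ^ a :=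
        integral_mono_on (by linarith)
          (intervalIntegrable_rpow_mul_sub_rpow_left ha hb hr)
          ((intervalIntegrable_rpow' ha).const_mul _)
          fun q hq => rpow_mul_sub_rpow_le_of_le_half hb hr hq.1 hq.2
    _ = (r / 2) ^ (a + b + 1) / (a + 1) := by
        rw [intervalIntegral.integral_const_mul, integral_rpow (Or.inl ha),
          Real.zero_rpow (by linarith), sub_zero, show a + b + 1 = b + (a + 1) by ring,
          Real.rpow_add (by linarith) b (a + 1), mul_div_assoc]

lemma intervalIntegrable_rpow_mul_sub_rpow (ha : -1 < a) (ha' : a ≤ 0) (hb : -1 < b)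
    (hb' : b ≤ 0) (hr : 0 < r) :
    IntervalIntegrable (fun q => q ^ a * (r - q) ^ b) volume 0 r := by
  have hright := (intervalIntegrable_rpow_mul_sub_rpow_left hb ha' hr).comp_sub_left r
  simp only [sub_sub_cancel, sub_zero, show r - r / 2 = r / 2 by ring, mul_comm] at hright
  exact (intervalIntegrable_rpow_mul_sub_rpow_left ha hb' hr).trans hright.symm

lemma integral_rpow_mul_sub_rpow_le (ha : -1 < a) (ha' : a ≤ 0) (hb : -1 < b) (hb' : b ≤ 0)
    (hr : 0 < r) :
    ∫ q in (0 : ℝ)..r, q ^ a * (r - q) ^ b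
      ≤ (r / 2) ^ (a + b + 1) * (1 / (a + 1) + 1 / (b + 1)) := by
  have hright : ∫ q in r / 2..r, q ^ a * (r - q) ^ b
      = ∫ q in (0 : ℝ)..r / 2, q ^ b * (r - q) ^ a := by
    have h := integral_comp_sub_left (a := r / 2) (b := r)
      (fun q => q ^ b * (r - q) ^ a) r
    simp only [sub_sub_cancel, sub_self, show r - r / 2 = r / 2 by ring] at h
    simpa only [mul_comm] using h
  have hleft := intervalIntegrable_rpow_mul_sub_rpow_left ha hb' hr
  rw [← integral_add_adjacent_intervals hleft
    ((intervalIntegrable_rpow_mul_sub_rpow ha ha' hb hb' hr).mono_set (by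
      rw [uIcc_of_le (by linarith), uIcc_of_le hr.le]; exact Icc_subset_Icc (by linarith) le_rfl)),
    hright]
  have h1 := integral_rpow_mul_sub_rpow_left_le ha hb' hr
  have h2 := integral_rpow_mul_sub_rpow_left_le hb ha' hr
  rw [show b + a + 1 = a + b + 1 by ring] at h2
  linarith [show (r / 2) ^ (a + b + 1) * (1 / (a + 1) + 1 / (b + 1))
    = (r / 2) ^ (a + b + 1) / (a + 1) + (r / 2) ^ (a + b + 1) / (b + 1) by ring]

end BetaIntegral

lemma nonneg_of_norm_sub_le_mul_rpow {E : Type*} [NormedAddCommGroup E] {u : ℝ → E}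
    {K β t : ℝ} (ht : 0 < t)
    (hu : ∀ q r : ℝ, 0 < q → q ≤ r → r ≤ t → ‖u r - u q‖ ≤ K * q ^ (-β) * (r - q) ^ β) :
    0 ≤ K := by
  have h := (norm_nonneg _).trans (hu (t / 2) t (by linarith) (by linarith) le_rfl)
  rwa [show t - t / 2 = t / 2 by ring, mul_assoc, ← Real.rpow_add (by linarith),
    neg_add_cancel, Real.rpow_zero, mul_one] at h

section WeightedHolder

variable {W : Type*} [NormedAddCommGroup W] [NormedSpace ℝ W]

theorem norm_fracDerivLeft_le {Z : ℝ → W} {α β r A K : ℝ} (hα0 : 0 < α) (hαβ : α < β)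
    (hβ1 : β < 1) (hr : 0 < r) (hK : 0 ≤ K) (hA : ‖Z r‖ ≤ A)
    (hZ : ∀ q ∈ Ioc 0 r, ‖Z r - Z q‖ ≤ K * q ^ (-β) * (r - q) ^ β) :
    ‖fracDerivLeft α 0 Z r‖
      ≤ 1 / Real.Gamma (1 - α) * r ^ (-α)
        * (A + α * (2 ^ α * (1 / (1 - β) + 1 / (β - α))) * K) := by
  have hΓ : 0 < Real.Gamma (1 - α) := Real.Gamma_pos_of_pos (by linarith)
  have hβ0 : 0 < β := hα0.trans hαβ
  set C := 2 ^ α * (1 / (1 - β) + 1 / (β - α))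
  have hbound : ∀ q ∈ Ioc 0 r,
      ‖(r - q) ^ (-(1 + α)) • (Z r - Z q)‖ ≤ K * (q ^ (-β) * (r - q) ^ (β - 1 - α)) := by
    intro q hq
    have hrq : 0 ≤ r - q := sub_nonneg.2 hq.2
    rw [norm_smul_of_nonneg (Real.rpow_nonneg hrq _),
      show β - 1 - α = -(1 + α) + β by ring, Real.rpow_add' hrq (by linarith)]
    calc (r - q) ^ (-(1 + α)) * ‖Z r - Z q‖
        ≤ (r - q) ^ (-(1 + α)) * (K * q ^ (-β) * (r - q) ^ β) := by gcongr; exact hZ q hq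
      _ = _ := by ring
  have hintegral : ∫ q in (0 : ℝ)..r, q ^ (-β) * (r - q) ^ (β - 1 - α) ≤ C * r ^ (-α) := by
    have h := integral_rpow_mul_sub_rpow_le (a := -β) (b := β - 1 - α)
      (by linarith) (by linarith) (by linarith) (by linarith) hr
    rw [show -β + (β - 1 - α) + 1 = -α by ring, show -β + 1 = 1 - β by ring,
      show β - 1 - α + 1 = β - α by ring, Real.div_rpow hr.le zero_le_two,
      Real.rpow_neg zero_le_two] at h
    linarith [show r ^ (-α) / (2 ^ α)⁻¹ * (1 / (1 - β) + 1 / (β - α)) = C * r ^ (-α) by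
      rw [div_inv_eq_mul]; ring]
  set I := ∫ q in (0 : ℝ)..r, (r - q) ^ (-(1 + α)) • (Z r - Z q)
  have hI : ‖I‖ ≤ K * (C * r ^ (-α)) :=
    calc _ ≤ ∫ q in (0 : ℝ)..r, K * (q ^ (-β) * (r - q) ^ (β - 1 - α)) :=
          intervalIntegral.norm_integral_le_of_norm_le hr.le (ae_of_all _ hbound)
            ((intervalIntegrable_rpow_mul_sub_rpow (by linarith) (by linarith) (by linarith)
              (by linarith) hr).const_mul K)
      _ ≤ _ := by rw [intervalIntegral.integral_const_mul]; gcongr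
  rw [fracDerivLeft, sub_zero, norm_smul_of_nonneg (by positivity)]
  calc 1 / Real.Gamma (1 - α) * ‖r ^ (-α) • Z r + α • I‖
      ≤ 1 / Real.Gamma (1 - α) * (r ^ (-α) * A + α * (K * (C * r ^ (-α)))) := by
        gcongr
        refine (norm_add_le _ _).trans ?_
        rw [norm_smul_of_nonneg (by positivity), norm_smul_of_nonneg hα0.le]
        gcongr
    _ = _ := by ring

lemma norm_exp_smul_le {lam t r : ℝ} (hlam : 0 ≤ lam) (hrt : r ≤ t) (x : W) :
    ‖Real.exp (-lam * (t - r)) • x‖ ≤ ‖x‖ := by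
  rw [norm_smul_of_nonneg (Real.exp_nonneg _)]
  exact mul_le_of_le_one_left (norm_nonneg x) (Real.exp_le_one_iff.2 (by nlinarith))

lemma norm_exp_smul_sub_exp_smul_le {g : ℝ → W} {lam t β D L q r : ℝ} (hlam : 0 ≤ lam)
    (hβ0 : 0 ≤ β) (hβ1 : β ≤ 1) (hq : 0 < q) (hqr : q ≤ r) (hrt : r < t) (hD : ‖g q‖ ≤ D)
    (hL : ‖g r - g q‖ ≤ L * q ^ (-β) * (r - q) ^ β) :
    ‖Real.exp (-lam * (t - r)) • g r - Real.exp (-lam * (t - q)) • g q‖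
      ≤ (L + D * (r ^ β * (t - r) ^ (-β))) * q ^ (-β) * (r - q) ^ β := by
  have hexp := Real.exp_neg_mul_sub_sub_exp_le hlam hβ0 hβ1 hqr hrt
  have hexp0 : 0 ≤ Real.exp (-lam * (t - r)) - Real.exp (-lam * (t - q)) :=
    sub_nonneg.2 (Real.exp_le_exp.2 (by nlinarith))
  have hweight : 1 ≤ r ^ β * q ^ (-β) := by
    rw [Real.rpow_neg hq.le, ← div_eq_mul_inv, one_le_div (by positivity)]
    exact Real.rpow_le_rpow hq.le hqr hβ0
  have hD0 : 0 ≤ D := (norm_nonneg _).trans hD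
  have hrq : 0 ≤ r - q := sub_nonneg.2 hqr
  calc ‖Real.exp (-lam * (t - r)) • g r - Real.exp (-lam * (t - q)) • g q‖
      = ‖Real.exp (-lam * (t - r)) • (g r - g q)
          + (Real.exp (-lam * (t - r)) - Real.exp (-lam * (t - q))) • g q‖ := by
        rw [smul_sub, sub_smul, sub_add_sub_cancel]
    _ ≤ ‖g r - g q‖ + (Real.exp (-lam * (t - r)) - Real.exp (-lam * (t - q))) * ‖g q‖ := by
        refine (norm_add_le _ _).trans (add_le_add (norm_exp_smul_le hlam hrt.le _) ?_)
        rw [norm_smul_of_nonneg hexp0]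
    _ ≤ L * q ^ (-β) * (r - q) ^ β + (r - q) ^ β * (t - r) ^ (-β) * D := by gcongr
    _ ≤ L * q ^ (-β) * (r - q) ^ β
          + (r - q) ^ β * (t - r) ^ (-β) * D * (r ^ β * q ^ (-β)) :=
        add_le_add_right (le_mul_of_one_le_right (mul_nonneg (mul_nonneg
          (Real.rpow_nonneg hrq _) (Real.rpow_nonneg (sub_nonneg.2 hrt.le) _)) hD0) hweight) _
    _ = _ := by ring

end WeightedHolder

theorem fracDerivLeft_semigroup_bound_general {V W : Type*}
    [NormedAddCommGroup V] [NormedSpace ℝ V]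
    [NormedAddCommGroup W] [NormedSpace ℝ W]
    {α β t cG cDG : ℝ} (ht : 0 < t) (hα0 : 0 < α) (hαβ : α < β) (hβ1 : β < 1)
    (hcG : 0 ≤ cG) (hcDG : 0 ≤ cDG) :
    ∃ c > 0, ∀ G : V → W,
      (∀ v : V, ‖G v‖ ≤ cG + cDG * ‖v‖) →
      (∀ v w : V, ‖G v - G w‖ ≤ cDG * ‖v - w‖) →
      ∀ lam : ℝ, 0 ≤ lam →
      ∀ (u : ℝ → V) (Mu Ku : ℝ),
        ContinuousOn u (Icc 0 t) →
        (∀ s ∈ Icc (0:ℝ) t, ‖u s‖ ≤ Mu) →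
        (∀ q r : ℝ, 0 < q → q ≤ r → r ≤ t →
          ‖u r - u q‖ ≤ Ku * q ^ (-β) * (r - q) ^ β) →
        ∀ r ∈ Ioo (0:ℝ) t,
          ‖fracDerivLeft α 0 (fun s => Real.exp (-lam * (t - s)) • G (u s)) r‖ ≤
            c * (1 + Mu + Ku) * r ^ (-α) * (1 + r ^ β * (t - r) ^ (-β)) := by
  set a := α * (2 ^ α * (1 / (1 - β) + 1 / (β - α)))
  have ha : 0 ≤ a := by
    have : 0 < 1 - β := by linarith
    have : 0 < β - α := by linarith
    positivity
  have hΓ : 0 < Real.Gamma (1 - α) := Real.Gamma_pos_of_pos (by linarith)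
  refine ⟨1 / Real.Gamma (1 - α) * (1 + cG + cDG) * (1 + a), by positivity, ?_⟩
  intro G hG hGL lam hlam u Mu Ku _ hMu hKu r ⟨hr0, hrt⟩
  have hMu0 : 0 ≤ Mu := (norm_nonneg _).trans (hMu 0 ⟨le_rfl, ht.le⟩)
  have hKu0 : 0 ≤ Ku := nonneg_of_norm_sub_le_mul_rpow ht hKu
  have hGu : ∀ s ∈ Icc 0 t, ‖G (u s)‖ ≤ cG + cDG * Mu := fun s hs =>
    (hG _).trans (by gcongr; exact hMu s hs)
  have hGu_sub : ∀ q ∈ Ioc 0 r, ‖G (u r) - G (u q)‖ ≤ cDG * Ku * q ^ (-β) * (r - q) ^ β :=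
    fun q hq => (hGL _ _).trans <| by
      simpa only [mul_assoc] using mul_le_mul_of_nonneg_left (hKu q r hq.1 hq.2 hrt.le) hcDG
  set P := r ^ β * (t - r) ^ (-β)
  have hP : 0 ≤ P := mul_nonneg (Real.rpow_nonneg hr0.le _) (Real.rpow_nonneg (by linarith) _)
  set Z := fun s => Real.exp (-lam * (t - s)) • G (u s)
  have hZr : ‖Z r‖ ≤ cG + cDG * Mu :=
    (norm_exp_smul_le hlam hrt.le _).trans (hGu r ⟨hr0.le, hrt.le⟩)
  have hZ_sub : ∀ q ∈ Ioc 0 r,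
      ‖Z r - Z q‖ ≤ (cDG * Ku + (cG + cDG * Mu) * P) * q ^ (-β) * (r - q) ^ β := fun q hq =>
    norm_exp_smul_sub_exp_smul_le (g := fun s => G (u s)) hlam (hα0.trans hαβ).le hβ1.le hq.1 hq.2
      hrt (hGu q ⟨hq.1.le, hq.2.trans hrt.le⟩) (hGu_sub q hq)
  refine (norm_fracDerivLeft_le hα0 hαβ hβ1 hr0 (by positivity) hZr hZ_sub).trans ?_
  set E := (1 + cG + cDG) * (1 + Mu + Ku)
  have hconst :
      cG + cDG * Mu + a * (cDG * Ku + (cG + cDG * Mu) * P) ≤ E * (1 + a) * (1 + P) := by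
    have hDE : cG + cDG * Mu ≤ E := by nlinarith
    have hKE : cDG * Ku ≤ E := by nlinarith
    have hE : 0 ≤ E := by positivity
    nlinarith [mul_le_mul_of_nonneg_left (add_le_add hKE (mul_le_mul_of_nonneg_right hDE hP)) ha,
      mul_nonneg hE hP, mul_nonneg (mul_nonneg hE hP) ha]
  calc _ ≤ 1 / Real.Gamma (1 - α) * r ^ (-α) * (E * (1 + a) * (1 + P)) := by gcongr
    _ = _ := by ring

/-- A priori estimate for the fractional derivative of `r ↦ e^{−λ(t−r)}G(u(r))`, where
`G` has linear growth (constants `c_G`, `c_{DG}`) and is `c_{DG}`-Lipschitz, and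
`u ∈ C^{β,∼}([0,t];V)` (sup bound `Mu`, weighted Hölder constant `Ku`): there is a
constant `c = c(α,β,t,c_G,c_{DG}) > 0`, independent of `λ ≥ 0` and of `u`, with
`‖D^α_{0+}(e^{−λ(t−·)}G(u(·)))[r]‖ ≤ c(1 + ‖u‖_{β,∼,0,t}) r^{−α}(1 + r^β (t−r)^{−β})`
for all `r ∈ (0,t)`. -/
theorem fracDerivLeft_semigroup_bound {V W : Type*}
    [NormedAddCommGroup V] [NormedSpace ℝ V] [CompleteSpace V]
    [NormedAddCommGroup W] [NormedSpace ℝ W] [CompleteSpace W]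
    {α β t cG cDG : ℝ} (ht : 0 < t) (hα0 : 0 < α) (hαβ : α < β) (hβ1 : β < 1)
    (hcG : 0 ≤ cG) (hcDG : 0 ≤ cDG) :
    ∃ c > 0, ∀ G : V → W,
      (∀ v : V, ‖G v‖ ≤ cG + cDG * ‖v‖) →
      (∀ v w : V, ‖G v - G w‖ ≤ cDG * ‖v - w‖) →
      ∀ lam : ℝ, 0 ≤ lam →
      ∀ (u : ℝ → V) (Mu Ku : ℝ),
        ContinuousOn u (Icc 0 t) →
        (∀ s ∈ Icc (0:ℝ) t, ‖u s‖ ≤ Mu) →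
        (∀ q r : ℝ, 0 < q → q ≤ r → r ≤ t →
          ‖u r - u q‖ ≤ Ku * q ^ (-β) * (r - q) ^ β) →
        ∀ r ∈ Ioo (0:ℝ) t,
          ‖fracDerivLeft α 0 (fun s => Real.exp (-lam * (t - s)) • G (u s)) r‖ ≤
            c * (1 + Mu + Ku) * r ^ (-α) * (1 + r ^ β * (t - r) ^ (-β)) :=
  fracDerivLeft_semigroup_bound_general ht hα0 hαβ hβ1 hcG hcDG
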